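/- Fix τ₁ < τ₂, B_Θ > 0. Define for parameters (r, g) ∈ [-B_Θ, B_Θ]² the three class probabilities π₀ = 1 - Φ(z₁), π₁ = Φ(z₁) - Φ(z₂), π₂ = Φ(z₂) with z_k = (r - τ_k)e^{-g}, and similarly (π₀*, π₁*, π₂*) from (r*, g*) ∈ [-B_Θ, B_Θ]². Then there is a constant c > 0, depending only on B_Θ, τ₁, τ₂, such that KL(π* ‖ π) ≥ c·((r - r*)² + (g - g*)²). -/

import Mathlib

/-!
The Kullback–Leibler divergence dominates the squared Hellinger distance, which on probability
vectors dominates a quarter of the squared Euclidean distance. Since `Φ(z₂) = π₂` and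
`Φ(z₁) = π₁ + π₂`, that distance controls the changes of `Φ(z₁)` and `Φ(z₂)`, and on `[-M, M]`
the increments of `Φ` are at least `φ(M)` times those of its argument. Finally the two scores
determine the parameters Lipschitz-continuously: `z₁ - z₂ = (τ₂ - τ₁) e^{-g}` recovers `g`,
and then `z₁` recovers `r`.
-/

noncomputable def stdGaussianPDF (t : ℝ) : ℝ :=
  (Real.sqrt (2 * Real.pi))⁻¹ * Real.exp (-t ^ 2 / 2)

noncomputable def stdGaussianCDF (x : ℝ) : ℝ :=
  ∫ t in Set.Iic x, stdGaussianPDF t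

/-- The three threshold-induced class probabilities for parameters `(r, g)`. -/
noncomputable def classProb (τ₁ τ₂ r g : ℝ) : Fin 3 → ℝ
  | 0 => 1 - stdGaussianCDF ((r - τ₁) * Real.exp (-g))
  | 1 => stdGaussianCDF ((r - τ₁) * Real.exp (-g)) - stdGaussianCDF ((r - τ₂) * Real.exp (-g))
  | 2 => stdGaussianCDF ((r - τ₂) * Real.exp (-g))

open MeasureTheory ProbabilityTheory Real Finset

lemma stdGaussianPDF_eq_gaussianPDFReal : stdGaussianPDF = gaussianPDFReal 0 1 := by
  ext t
  simp [stdGaussianPDF, gaussianPDFReal]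

lemma stdGaussianPDF_pos (t : ℝ) : 0 < stdGaussianPDF t := by
  unfold stdGaussianPDF
  positivity

lemma integrable_stdGaussianPDF : Integrable stdGaussianPDF := by
  rw [stdGaussianPDF_eq_gaussianPDFReal]
  exact integrable_gaussianPDFReal 0 1

lemma stdGaussianPDF_le_of_abs_le {t M : ℝ} (ht : |t| ≤ M) :
    stdGaussianPDF M ≤ stdGaussianPDF t := by
  unfold stdGaussianPDF
  have := sq_le_sq' (neg_le_of_abs_le ht) (le_of_abs_le ht)
  gcongr

lemma stdGaussianCDF_sub (a b : ℝ) :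
    stdGaussianCDF b - stdGaussianCDF a = ∫ t in a..b, stdGaussianPDF t :=
  intervalIntegral.integral_Iic_sub_Iic integrable_stdGaussianPDF.integrableOn
    integrable_stdGaussianPDF.integrableOn

lemma mul_sub_le_stdGaussianCDF_sub {a b M : ℝ} (hab : a ≤ b) (ha : |a| ≤ M) (hb : |b| ≤ M) :
    stdGaussianPDF M * (b - a) ≤ stdGaussianCDF b - stdGaussianCDF a := by
  calc stdGaussianPDF M * (b - a) = ∫ _ in a..b, stdGaussianPDF M := by
        rw [intervalIntegral.integral_const, smul_eq_mul, mul_comm]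
    _ ≤ ∫ t in a..b, stdGaussianPDF t :=
        intervalIntegral.integral_mono_on hab intervalIntegrable_const
          integrable_stdGaussianPDF.intervalIntegrable fun t ht => stdGaussianPDF_le_of_abs_le ?_
    _ = stdGaussianCDF b - stdGaussianCDF a := (stdGaussianCDF_sub a b).symm
  exact abs_le.2 ⟨by linarith [(abs_le.1 ha).1, ht.1], by linarith [(abs_le.1 hb).2, ht.2]⟩

lemma mul_abs_sub_le_abs_stdGaussianCDF_sub {a b M : ℝ} (ha : |a| ≤ M) (hb : |b| ≤ M) :
    stdGaussianPDF M * |a - b| ≤ |stdGaussianCDF a - stdGaussianCDF b| := by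
  wlog hab : b ≤ a generalizing a b
  · rw [abs_sub_comm a, abs_sub_comm (stdGaussianCDF a)]
    exact this hb ha (le_of_not_ge hab)
  rw [abs_of_nonneg (sub_nonneg.2 hab)]
  exact (mul_sub_le_stdGaussianCDF_sub hab hb ha).trans (le_abs_self _)

lemma stdGaussianCDF_strictMono : StrictMono stdGaussianCDF := fun a b hab => by
  have := mul_sub_le_stdGaussianCDF_sub hab.le (le_max_left |a| |b|) (le_max_right |a| |b|)
  nlinarith [stdGaussianPDF_pos (max |a| |b|)]

lemma stdGaussianCDF_nonneg (x : ℝ) : 0 ≤ stdGaussianCDF x :=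
  setIntegral_nonneg measurableSet_Iic fun t _ => (stdGaussianPDF_pos t).le

lemma stdGaussianCDF_le_one (x : ℝ) : stdGaussianCDF x ≤ 1 := by
  calc stdGaussianCDF x ≤ ∫ t, stdGaussianPDF t :=
        setIntegral_le_integral integrable_stdGaussianPDF
          (Filter.Eventually.of_forall fun t => (stdGaussianPDF_pos t).le)
    _ = 1 := by
        rw [stdGaussianPDF_eq_gaussianPDFReal]
        exact integral_gaussianPDFReal_eq_one 0 one_ne_zero

lemma stdGaussianCDF_pos (x : ℝ) : 0 < stdGaussianCDF x :=
  (stdGaussianCDF_nonneg (x - 1)).trans_lt (stdGaussianCDF_strictMono (sub_one_lt x))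

lemma stdGaussianCDF_lt_one (x : ℝ) : stdGaussianCDF x < 1 :=
  (stdGaussianCDF_strictMono (lt_add_one x)).trans_le (stdGaussianCDF_le_one _)

lemma sq_sub_le_mul_log_div_add_sub {a b : ℝ} (ha : 0 < a) (hb : 0 < b) :
    (a - b) ^ 2 ≤ a ^ 2 * log (a ^ 2 / b ^ 2) + b ^ 2 - a ^ 2 := by
  have hlog : 1 - b / a ≤ log (a / b) := by
    simpa using one_sub_inv_le_log_of_pos (div_pos ha hb)
  rw [← div_pow, log_pow]
  have : a ^ 2 * (1 - b / a) = a ^ 2 - a * b := by field_simp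
  nlinarith [mul_le_mul_of_nonneg_left hlog (sq_nonneg a)]

lemma sq_sub_le_four_mul_mul_log_div_add_sub {x y : ℝ} (hx : 0 < x) (hy : 0 < y)
    (hxy : x + y ≤ 2) : (x - y) ^ 2 ≤ 4 * (x * log (x / y) + y - x) := by
  obtain ⟨a, ha, rfl⟩ : ∃ a, 0 < a ∧ a ^ 2 = x := ⟨√x, sqrt_pos.2 hx, sq_sqrt hx.le⟩
  obtain ⟨b, hb, rfl⟩ : ∃ b, 0 < b ∧ b ^ 2 = y := ⟨√y, sqrt_pos.2 hy, sq_sqrt hy.le⟩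
  have hsum : (a + b) ^ 2 ≤ 4 := by nlinarith [sq_nonneg (a - b)]
  calc (a ^ 2 - b ^ 2) ^ 2 = (a - b) ^ 2 * (a + b) ^ 2 := by ring
    _ ≤ (a - b) ^ 2 * 4 := by gcongr
    _ ≤ 4 * (a ^ 2 * log (a ^ 2 / b ^ 2) + b ^ 2 - a ^ 2) := by
        linarith [sq_sub_le_mul_log_div_add_sub ha hb]

lemma sum_sq_sub_le_four_mul_sum_mul_log_div {ι : Type*} [Fintype ι] {p q : ι → ℝ}
    (hp : ∀ i, 0 < p i) (hq : ∀ i, 0 < q i) (hp1 : ∑ i, p i = 1) (hq1 : ∑ i, q i = 1) :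
    ∑ i, (p i - q i) ^ 2 ≤ 4 * ∑ i, p i * log (p i / q i) := by
  have hle_one {r : ι → ℝ} (hr : ∀ i, 0 < r i) (hr1 : ∑ i, r i = 1) (i : ι) : r i ≤ 1 :=
    hr1 ▸ single_le_sum (fun j _ => (hr j).le) (mem_univ i)
  calc ∑ i, (p i - q i) ^ 2 ≤ ∑ i, 4 * (p i * log (p i / q i) + q i - p i) :=
        sum_le_sum fun i _ => sq_sub_le_four_mul_mul_log_div_add_sub (hp i) (hq i)
          (by linarith [hle_one hp hp1 i, hle_one hq hq1 i])
    _ = 4 * ∑ i, p i * log (p i / q i) + 4 * (∑ i, q i - ∑ i, p i) := by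
        simp only [← mul_sum, sum_sub_distrib, sum_add_distrib]; ring
    _ = 4 * ∑ i, p i * log (p i / q i) := by rw [hp1, hq1]; ring

lemma exp_neg_mul_abs_sub_le_abs_exp_sub {a b B : ℝ} (ha : -B ≤ a) (hb : -B ≤ b) :
    exp (-B) * |a - b| ≤ |exp a - exp b| := by
  wlog hab : b ≤ a generalizing a b
  · rw [abs_sub_comm a, abs_sub_comm (exp a)]
    exact this hb ha (le_of_not_ge hab)
  have hexp : exp b * (a - b + 1) ≤ exp a := by
    calc exp b * (a - b + 1) ≤ exp b * exp (a - b) := by gcongr; exact add_one_le_exp _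
      _ = exp a := by rw [← exp_add]; ring_nf
  rw [abs_of_nonneg (sub_nonneg.2 hab), abs_of_nonneg (sub_nonneg.2 (exp_le_exp.2 hab))]
  nlinarith [exp_le_exp.2 hb]

/-- The paper's score `z_k`, for the anchor `τ = τ_k`. -/
noncomputable def anchorScore (τ r g : ℝ) : ℝ := (r - τ) * exp (-g)

lemma abs_anchorScore_le {τ r g B T : ℝ} (hτ : |τ| ≤ T) (hr : |r| ≤ B) (hg : |g| ≤ B) :
    |anchorScore τ r g| ≤ (B + T) * exp B := by
  rw [anchorScore, abs_mul, abs_exp]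
  exact mul_le_mul ((abs_sub _ _).trans (add_le_add hr hτ))
    (exp_le_exp.2 (by linarith [neg_le_of_abs_le hg]))
    (exp_pos _).le (by linarith [abs_nonneg r, abs_nonneg τ])

lemma anchorScore_lt_anchorScore {τ₁ τ₂ : ℝ} (hτ : τ₁ < τ₂) (r g : ℝ) :
    anchorScore τ₂ r g < anchorScore τ₁ r g := by
  unfold anchorScore
  gcongr

lemma abs_sub_add_abs_sub_le_of_anchorScore {τ₁ τ₂ B r g rs gs : ℝ} (hτ : τ₁ < τ₂)
    (hrs : |rs| ≤ B) (hg : |g| ≤ B) (hgs : |gs| ≤ B) :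
    |r - rs| + |g - gs| ≤ exp B * (1 + (1 + B + |τ₁|) / (τ₂ - τ₁)) *
      (|anchorScore τ₁ r g - anchorScore τ₁ rs gs| +
        |anchorScore τ₂ r g - anchorScore τ₂ rs gs|) := by
  set w₁ := anchorScore τ₁ r g - anchorScore τ₁ rs gs
  set w₂ := anchorScore τ₂ r g - anchorScore τ₂ rs gs
  set u := exp (-g)
  set us := exp (-gs)
  have hδ : 0 < τ₂ - τ₁ := sub_pos.2 hτ
  have hu : exp (-B) ≤ u := exp_le_exp.2 (neg_le_neg (le_of_abs_le hg))
  have hgap : (τ₂ - τ₁) * (u - us) = w₁ - w₂ := by simp only [w₁, w₂, anchorScore]; ring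
  have hshift : u * (r - rs) = w₁ - (rs - τ₁) * (u - us) := by
    simp only [w₁, anchorScore]; ring
  have hu_sub : |u - us| ≤ (|w₁| + |w₂|) / (τ₂ - τ₁) := by
    rw [le_div_iff₀ hδ, mul_comm, ← abs_of_pos hδ, ← abs_mul, hgap]
    exact abs_sub _ _
  have hg_sub : |g - gs| ≤ exp B * |u - us| := by
    have := exp_neg_mul_abs_sub_le_abs_exp_sub (neg_le_neg (le_of_abs_le hg))
      (neg_le_neg (le_of_abs_le hgs))
    rwa [show -g - -gs = -(g - gs) by ring, abs_neg, exp_neg, inv_mul_le_iff₀ (exp_pos B)] at this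
  have hr_sub : |r - rs| ≤ exp B * (|w₁| + (B + |τ₁|) * |u - us|) := by
    rw [← inv_mul_le_iff₀ (exp_pos B), ← exp_neg]
    calc exp (-B) * |r - rs| ≤ |u * (r - rs)| := by
          rw [abs_mul, abs_of_pos (exp_pos _)]; gcongr
      _ ≤ |w₁| + |rs - τ₁| * |u - us| := by rw [hshift, ← abs_mul]; exact abs_sub _ _
      _ ≤ |w₁| + (B + |τ₁|) * |u - us| := by
          gcongr; exact (abs_sub _ _).trans (by linarith)
  calc |r - rs| + |g - gs| ≤ exp B * (|w₁| + (1 + B + |τ₁|) * |u - us|) := by linarith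
    _ ≤ exp B * (|w₁| + |w₂| + (1 + B + |τ₁|) * ((|w₁| + |w₂|) / (τ₂ - τ₁))) := by
        have : 0 ≤ 1 + B + |τ₁| := by linarith [(abs_nonneg rs).trans hrs, abs_nonneg τ₁]
        gcongr
        exact le_add_of_nonneg_right (abs_nonneg _)
    _ = exp B * (1 + (1 + B + |τ₁|) / (τ₂ - τ₁)) * (|w₁| + |w₂|) := by ring

lemma sq_add_sq_le_of_abs_add_abs_le {a b c d L : ℝ} (h : |a| + |b| ≤ L * (|c| + |d|)) :
    a ^ 2 + b ^ 2 ≤ 2 * L ^ 2 * (c ^ 2 + d ^ 2) := by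
  have h' := pow_le_pow_left₀ (by positivity) h 2
  nlinarith [sq_abs a, sq_abs b, sq_abs c, sq_abs d, abs_nonneg a, abs_nonneg b,
    sq_nonneg (|c| - |d|), sq_nonneg L]

lemma classProb_pos {τ₁ τ₂ : ℝ} (hτ : τ₁ < τ₂) (r g : ℝ) (ℓ : Fin 3) :
    0 < classProb τ₁ τ₂ r g ℓ := by
  fin_cases ℓ
  · exact sub_pos.2 (stdGaussianCDF_lt_one _)
  · exact sub_pos.2 (stdGaussianCDF_strictMono (anchorScore_lt_anchorScore hτ r g))
  · exact stdGaussianCDF_pos _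

lemma sum_classProb (τ₁ τ₂ r g : ℝ) : ∑ ℓ, classProb τ₁ τ₂ r g ℓ = 1 := by
  simp only [Fin.sum_univ_three, classProb]
  ring

lemma sq_add_sq_le_sum_sq_classProb_sub (τ₁ τ₂ r g rs gs : ℝ) :
    (stdGaussianCDF (anchorScore τ₁ r g) - stdGaussianCDF (anchorScore τ₁ rs gs)) ^ 2 +
      (stdGaussianCDF (anchorScore τ₂ r g) - stdGaussianCDF (anchorScore τ₂ rs gs)) ^ 2 ≤
    ∑ ℓ, (classProb τ₁ τ₂ rs gs ℓ - classProb τ₁ τ₂ r g ℓ) ^ 2 := by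
  have := sq_nonneg (classProb τ₁ τ₂ r g 1 - classProb τ₁ τ₂ rs gs 1)
  simp only [Fin.sum_univ_three, classProb, anchorScore] at this ⊢
  linarith

theorem two_anchor_kl_curvature_lower (τ₁ τ₂ B : ℝ) (hτ : τ₁ < τ₂) (hB : 0 < B) :
    ∃ c > 0, ∀ r g rs gs : ℝ,
      |r| ≤ B → |g| ≤ B → |rs| ≤ B → |gs| ≤ B →
      (∑ ℓ, classProb τ₁ τ₂ rs gs ℓ *
          Real.log (classProb τ₁ τ₂ rs gs ℓ / classProb τ₁ τ₂ r g ℓ))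
        ≥ c * ((r - rs) ^ 2 + (g - gs) ^ 2) := by
  set M := (B + max |τ₁| |τ₂|) * exp B
  set L := exp B * (1 + (1 + B + |τ₁|) / (τ₂ - τ₁))
  have hφ := stdGaussianPDF_pos M
  have hL : 0 < L := by have := sub_pos.2 hτ; positivity
  refine ⟨stdGaussianPDF M ^ 2 / (8 * L ^ 2), by positivity, fun r g rs gs hr hg hrs hgs => ?_⟩
  set w₁ := anchorScore τ₁ r g - anchorScore τ₁ rs gs
  set w₂ := anchorScore τ₂ r g - anchorScore τ₂ rs gs
  have hlip := abs_sub_add_abs_sub_le_of_anchorScore (r := r) hτ hrs hg hgs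
  have hcdf {τ : ℝ} (hτM : |τ| ≤ max |τ₁| |τ₂|) :=
    mul_abs_sub_le_abs_stdGaussianCDF_sub (abs_anchorScore_le hτM hr hg)
      (abs_anchorScore_le hτM hrs hgs)
  have hcdf₁ := hcdf (le_max_left _ _)
  have hcdf₂ := hcdf (le_max_right _ _)
  have hkl := sum_sq_sub_le_four_mul_sum_mul_log_div (classProb_pos hτ rs gs)
    (classProb_pos hτ r g) (sum_classProb τ₁ τ₂ rs gs) (sum_classProb τ₁ τ₂ r g)
  have hsq := sq_add_sq_le_sum_sq_classProb_sub τ₁ τ₂ r g rs gs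
  have hφw {w Δ : ℝ} (h : stdGaussianPDF M * |w| ≤ |Δ|) : (stdGaussianPDF M * |w|) ^ 2 ≤ Δ ^ 2 :=
    sq_abs Δ ▸ pow_le_pow_left₀ (by positivity) h 2
  calc stdGaussianPDF M ^ 2 / (8 * L ^ 2) * ((r - rs) ^ 2 + (g - gs) ^ 2)
      ≤ stdGaussianPDF M ^ 2 / (8 * L ^ 2) * (2 * L ^ 2 * (w₁ ^ 2 + w₂ ^ 2)) := by
        gcongr
        exact sq_add_sq_le_of_abs_add_abs_le hlip
    _ = ((stdGaussianPDF M * |w₁|) ^ 2 + (stdGaussianPDF M * |w₂|) ^ 2) / 4 := by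
        simp only [mul_pow, sq_abs]
        field_simp
        ring
    _ ≤ ∑ ℓ, classProb τ₁ τ₂ rs gs ℓ * log (classProb τ₁ τ₂ rs gs ℓ / classProb τ₁ τ₂ r g ℓ) := by
        linarith [hφw hcdf₁, hφw hcdf₂]
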